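/- arXiv:2508.01737 — 2 statements merged into one kernel-verified Lean document; each statement's English description precedes it below -/
import Mathlib

section
/- For every real a ≥ 0, the integral over [0,1] of ε(a x) dx is at most 1/2, where ε(t) = ⌊t⌋ mod 2. -/
open MeasureTheory

/-- `ε(t) = ⌊t⌋ - 2⌊t/2⌋`, the parity of `⌊t⌋`. -/
noncomputable def eps (t : ℝ) : ℝ := (⌊t⌋ : ℝ) - 2 * (⌊t / 2⌋ : ℝ)

lemma eps_nonneg (t : ℝ) : 0 ≤ eps t := by
  have h : (2 : ℤ) * ⌊t / 2⌋ ≤ ⌊t⌋ := by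
    rw [Int.le_floor]
    push_cast
    linarith [Int.floor_le (t / 2)]
  unfold eps
  have h2 : (2:ℝ) * (⌊t / 2⌋ : ℝ) ≤ (⌊t⌋ : ℝ) := by exact_mod_cast h
  linarith

lemma eps_le_one (t : ℝ) : eps t ≤ 1 := by
  have h : ⌊t⌋ < 2 * ⌊t / 2⌋ + 2 := by
    have := Int.lt_floor_add_one (t / 2)
    rw [Int.floor_lt]
    push_cast
    linarith
  have h' : ⌊t⌋ ≤ 2 * ⌊t / 2⌋ + 1 := by omega
  unfold eps
  have h2 : (⌊t⌋ : ℝ) ≤ 2 * (⌊t / 2⌋ : ℝ) + 1 := by exact_mod_cast h'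
  linarith

lemma eps_measurable : Measurable eps := by
  unfold eps
  exact (measurable_from_top.comp measurable_id.floor).sub
    ((measurable_from_top.comp (measurable_id.div_const 2).floor).const_mul 2)

lemma eps_intervalIntegrable (a b : ℝ) : IntervalIntegrable eps volume a b := by
  rw [intervalIntegrable_iff]
  apply MeasureTheory.Measure.integrableOn_of_bounded (M := 1)
  · exact (measure_Ioc_lt_top).ne
  · exact eps_measurable.aestronglyMeasurable
  · filter_upwards with t
    rw [Real.norm_eq_abs, abs_le]
    exact ⟨by linarith [eps_nonneg t], eps_le_one t⟩

lemma eps_zero_of (t : ℝ) (h0 : 0 ≤ t) (h1 : t < 1) : eps t = 0 := by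
  unfold eps
  rw [Int.floor_eq_zero_iff.2 ⟨h0, h1⟩, Int.floor_eq_zero_iff.2 ⟨by linarith, by linarith⟩]
  norm_num

lemma eps_one_of (t : ℝ) (h0 : 1 ≤ t) (h1 : t < 2) : eps t = 1 := by
  unfold eps
  have : ⌊t⌋ = 1 := by
    rw [Int.floor_eq_iff]; push_cast; constructor <;> linarith
  rw [this, Int.floor_eq_zero_iff.2 ⟨by linarith, by linarith⟩]
  norm_num

lemma eps_add_two (t : ℝ) : eps (t + 2) = eps t := by
  unfold eps
  have h1 : ⌊t + 2⌋ = ⌊t⌋ + 2 := by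
    have := Int.floor_add_intCast t 2; push_cast at this ⊢; exact_mod_cast this
  have h2 : ⌊(t + 2) / 2⌋ = ⌊t / 2⌋ + 1 := by
    have : (t + 2) / 2 = t / 2 + (1 : ℤ) := by push_cast; ring
    rw [this, Int.floor_add_intCast]
  rw [h1, h2]
  push_cast
  ring

/-- Integral from 0 to 1 is 0. -/
lemma integral_eps_zero_one_le (b : ℝ) (hb0 : 0 ≤ b) (hb1 : b ≤ 1) :
    ∫ t in (0:ℝ)..b, eps t = 0 := by
  rw [intervalIntegral.integral_congr_ae (g := fun _ => (0:ℝ)), intervalIntegral.integral_zero]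
  have h1 : volume ({(1:ℝ)} : Set ℝ) = 0 := measure_singleton 1
  rw [MeasureTheory.ae_iff]
  apply measure_mono_null _ h1
  intro t ht
  simp only [Set.mem_setOf_eq, not_forall] at ht
  obtain ⟨htmem, hne⟩ := ht
  rw [Set.uIoc_of_le hb0] at htmem
  by_contra hne1
  exact hne (eps_zero_of t (le_of_lt htmem.1)
    (lt_of_le_of_ne (le_trans htmem.2 hb1) (by simpa using hne1)))

lemma integral_eps_one_b (b : ℝ) (hb0 : 1 ≤ b) (hb1 : b ≤ 2) :
    ∫ t in (1:ℝ)..b, eps t = b - 1 := by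
  have : ∫ t in (1:ℝ)..b, eps t = ∫ t in (1:ℝ)..b, (1:ℝ) := by
    apply intervalIntegral.integral_congr_ae
    have h1 : volume ({(2:ℝ)} : Set ℝ) = 0 := measure_singleton 2
    rw [MeasureTheory.ae_iff]
    apply measure_mono_null _ h1
    intro t ht
    simp only [Set.mem_setOf_eq, not_forall] at ht
    obtain ⟨htmem, hne⟩ := ht
    rw [Set.uIoc_of_le hb0] at htmem
    by_contra hne2
    exact hne (eps_one_of t (le_of_lt htmem.1)
      (lt_of_le_of_ne (le_trans htmem.2 hb1) (by simpa using hne2)))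
  rw [this]
  simp

lemma integral_eps_le_of_le_two (b : ℝ) (hb0 : 0 ≤ b) (hb2 : b ≤ 2) :
    ∫ t in (0:ℝ)..b, eps t ≤ b / 2 := by
  rcases le_or_gt b 1 with h | h
  · rw [integral_eps_zero_one_le b hb0 h]; linarith
  · have hsplit : ∫ t in (0:ℝ)..b, eps t
        = (∫ t in (0:ℝ)..1, eps t) + ∫ t in (1:ℝ)..b, eps t :=
      (intervalIntegral.integral_add_adjacent_intervals
        (eps_intervalIntegrable 0 1) (eps_intervalIntegrable 1 b)).symm
    rw [hsplit, integral_eps_zero_one_le 1 (by norm_num) (by norm_num),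
      integral_eps_one_b b h.le hb2]
    linarith

lemma integral_eps_eq_one : ∫ t in (0:ℝ)..2, eps t = 1 := by
  have hsplit : ∫ t in (0:ℝ)..2, eps t
      = (∫ t in (0:ℝ)..1, eps t) + ∫ t in (1:ℝ)..2, eps t :=
    (intervalIntegral.integral_add_adjacent_intervals
      (eps_intervalIntegrable 0 1) (eps_intervalIntegrable 1 2)).symm
  rw [hsplit, integral_eps_zero_one_le 1 (by norm_num) (by norm_num),
    integral_eps_one_b 2 (by norm_num) (by norm_num)]
  norm_num

lemma integral_eps_le_half_aux (n : ℕ) :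
    ∀ b : ℝ, 0 ≤ b → b ≤ 2 → ∫ t in (0:ℝ)..(2 * n + b), eps t ≤ (2 * n + b) / 2 := by
  induction n with
  | zero => intro b hb0 hb2; simpa using integral_eps_le_of_le_two b hb0 hb2
  | succ n ih =>
    intro b hb0 hb2
    have key : (2 : ℝ) * (↑(n + 1)) + b = 2 * (n:ℝ) + b + 2 := by push_cast; ring
    rw [key]
    have h1 : ∫ t in (0:ℝ)..(2 * (n:ℝ) + b + 2), eps t
        = (∫ t in (0:ℝ)..2, eps t) + ∫ t in (2:ℝ)..(2 * (n:ℝ) + b + 2), eps t :=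
      (intervalIntegral.integral_add_adjacent_intervals
        (eps_intervalIntegrable 0 2) (eps_intervalIntegrable 2 _)).symm
    have h2 : ∫ t in (2:ℝ)..(2 * (n:ℝ) + b + 2), eps t
        = ∫ t in (0:ℝ)..(2 * (n:ℝ) + b), eps t := by
      have h3 := intervalIntegral.integral_comp_add_right (a := (0:ℝ)) (b := 2 * (n:ℝ) + b) eps 2
      rw [zero_add] at h3
      rw [← h3]
      exact intervalIntegral.integral_congr (fun t _ => eps_add_two t)
    rw [h1, h2, integral_eps_eq_one]
    have := ih b hb0 hb2
    linarith

lemma integral_eps_le (a : ℝ) (ha : 0 ≤ a) : ∫ t in (0:ℝ)..a, eps t ≤ a / 2 := by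
  set n : ℕ := ⌊a / 2⌋₊ with hn
  have hb0 : 0 ≤ a - 2 * n := by
    have := Nat.floor_le (by positivity : (0:ℝ) ≤ a / 2)
    rw [← hn] at this
    linarith
  have hb2 : a - 2 * n ≤ 2 := by
    have := Nat.lt_floor_add_one (a / 2)
    rw [← hn] at this
    linarith
  have := integral_eps_le_half_aux n (a - 2 * n) hb0 hb2
  have ha' : 2 * (n : ℝ) + (a - 2 * n) = a := by ring
  rwa [ha'] at this

/-- For every `a ≥ 0`, `∫₀¹ ε(ax) dx ≤ 1/2`. -/
theorem integral_eps_le_half (a : ℝ) (ha : 0 ≤ a) :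
    ∫ x in (0 : ℝ)..1, eps (a * x) ≤ 1 / 2 := by
  rcases eq_or_lt_of_le ha with h | h
  · simp [← h, eps_zero_of 0 le_rfl one_pos]
  · have hsub := intervalIntegral.smul_integral_comp_mul_left (a := (0:ℝ)) (b := 1) eps a
    rw [mul_zero, mul_one] at hsub
    have hint := integral_eps_le a ha
    rw [← hsub] at hint
    rw [smul_eq_mul] at hint
    nlinarith [hint]
end

section
/- In the two-player Levine game with infinite stacks, if both players use the first-black-hat strategy (each names the index of the first black hat in the other player's stack), the probability of victory equals 1/3. Equivalently, with k(y) = -⌊log₂ y⌋ for y ∈ (0,1), one has ∫₀¹∫₀¹ ε(2^{k(y)} x) ε(2^{k(x)} y) dx dy = 1/3. -/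
/-- The first-black-hat choice function: `k(y) = -⌊log₂ y⌋`. -/
noncomputable def fbh (y : ℝ) : ℤ := -⌊Real.logb 2 y⌋

open Set MeasureTheory Function

lemma eps_of_mem_Ico_zero_one {t : ℝ} (ht : t ∈ Ico (0 : ℝ) 1) : eps t = 0 := by
  have h₁ : ⌊t⌋ = 0 := Int.floor_eq_zero_iff.mpr ht
  have h₂ : ⌊t / 2⌋ = 0 := Int.floor_eq_zero_iff.mpr ⟨by linarith [ht.1], by linarith [ht.2]⟩
  simp [eps, h₁, h₂]

lemma eps_of_mem_Ico_one_two {t : ℝ} (ht : t ∈ Ico (1 : ℝ) 2) : eps t = 1 := by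
  have h₁ : ⌊t⌋ = 1 := Int.floor_eq_iff.mpr ⟨by exact_mod_cast ht.1, by norm_num [ht.2]⟩
  have h₂ : ⌊t / 2⌋ = 0 := Int.floor_eq_zero_iff.mpr ⟨by linarith [ht.1], by linarith [ht.2]⟩
  simp [eps, h₁, h₂]

lemma measurable_fbh : Measurable fbh :=
  (Real.measurable_log.div_const _).floor.neg

lemma fbh_eq_neg_log {x : ℝ} (hx : 0 ≤ x) : fbh x = -Int.log 2 x := by
  rw [fbh, ← Real.floor_logb_natCast hx, Nat.cast_ofNat]

def fbhLevel (k : ℤ) : Set ℝ := Ico ((2 : ℝ) ^ (-k)) (2 ^ (-k + 1))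

lemma fbh_eq_iff_mem_fbhLevel {x : ℝ} (hx : 0 < x) {k : ℤ} : fbh x = k ↔ x ∈ fbhLevel k := by
  have hle := Int.zpow_le_iff_le_log (R := ℝ) one_lt_two (x := -k) hx
  have hlt := Int.lt_zpow_iff_log_lt (R := ℝ) one_lt_two (x := -k + 1) hx
  simp only [Nat.cast_ofNat] at hle hlt
  rw [fbh_eq_neg_log hx.le, fbhLevel, mem_Ico, hle, hlt]
  omega

lemma mem_fbhLevel_fbh {x : ℝ} (hx : 0 < x) : x ∈ fbhLevel (fbh x) :=
  (fbh_eq_iff_mem_fbhLevel hx).1 rfl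

lemma measurableSet_fbhLevel (k : ℤ) : MeasurableSet (fbhLevel k) := measurableSet_Ico

lemma pos_of_mem_fbhLevel {x : ℝ} {k : ℤ} (hx : x ∈ fbhLevel k) : 0 < x :=
  (zpow_pos two_pos _).trans_le hx.1

lemma pairwise_disjoint_fbhLevel : Pairwise (Disjoint on fbhLevel) := by
  intro j k hjk
  refine Set.disjoint_left.2 fun x hj hk => hjk ?_
  have hx := pos_of_mem_fbhLevel hj
  rw [← (fbh_eq_iff_mem_fbhLevel hx).2 hj, ← (fbh_eq_iff_mem_fbhLevel hx).2 hk]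

lemma fbhLevel_subset_Ioo {k : ℤ} (hk : 1 ≤ k) : fbhLevel k ⊆ Ioo 0 1 := fun x hx =>
  ⟨pos_of_mem_fbhLevel hx, hx.2.trans_le (zpow_le_one_of_nonpos₀ one_le_two (by omega))⟩

lemma volume_real_fbhLevel (k : ℤ) : volume.real (fbhLevel k) = 2 ^ (-k) := by
  have h : (2 : ℝ) ^ (-k + 1) = 2 * 2 ^ (-k) := by rw [zpow_add_one₀ two_ne_zero]; ring
  rw [fbhLevel, Real.volume_real_Ico_of_le (zpow_le_zpow_right₀ one_le_two (by omega)), h]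
  ring

lemma one_le_fbh {y : ℝ} (hy : y ∈ Ioo (0 : ℝ) 1) : 1 ≤ fbh y := by
  by_contra! h
  have hlow := (mem_fbhLevel_fbh hy.1).1
  linarith [hy.2, one_le_zpow₀ (one_le_two : (1 : ℝ) ≤ 2) (by omega : 0 ≤ -fbh y)]

lemma zpow_mul_mem_Ico {x : ℝ} (hx : 0 < x) (k : ℤ) :
    (2 : ℝ) ^ k * x ∈ Ico ((2 : ℝ) ^ (k - fbh x)) (2 ^ (k - fbh x + 1)) := by
  obtain ⟨h₁, h₂⟩ := mem_fbhLevel_fbh hx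
  have hk : (0 : ℝ) < 2 ^ k := zpow_pos two_pos k
  rw [sub_eq_add_neg, add_assoc, zpow_add₀ two_ne_zero, zpow_add₀ two_ne_zero]
  exact ⟨mul_le_mul_of_nonneg_left h₁ hk.le, mul_lt_mul_of_pos_left h₂ hk⟩

lemma eps_zpow_fbh_mul {x : ℝ} (hx : 0 < x) : eps ((2 : ℝ) ^ fbh x * x) = 1 := by
  apply eps_of_mem_Ico_one_two
  simpa using zpow_mul_mem_Ico hx (fbh x)

lemma eps_zpow_mul_of_lt_fbh {x : ℝ} (hx : 0 < x) {k : ℤ} (hk : k < fbh x) :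
    eps ((2 : ℝ) ^ k * x) = 0 := by
  obtain ⟨h₁, h₂⟩ := zpow_mul_mem_Ico hx k
  exact eps_of_mem_Ico_zero_one
    ⟨(zpow_pos two_pos _).le.trans h₁, h₂.trans_le (zpow_le_one_of_nonpos₀ one_le_two (by omega))⟩

lemma eps_mul_eps_eq_ite {x y : ℝ} (hx : 0 < x) (hy : 0 < y) :
    eps ((2 : ℝ) ^ fbh y * x) * eps ((2 : ℝ) ^ fbh x * y) = if fbh x = fbh y then 1 else 0 := by
  rcases lt_trichotomy (fbh x) (fbh y) with h | h | h
  · rw [eps_zpow_mul_of_lt_fbh hy h, mul_zero, if_neg h.ne]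
  · rw [if_pos h, ← h, eps_zpow_fbh_mul hx, h, eps_zpow_fbh_mul hy, one_mul]
  · rw [eps_zpow_mul_of_lt_fbh hx h, zero_mul, if_neg h.ne']

lemma integral_ite_fbh_eq {k : ℤ} (hk : 1 ≤ k) :
    ∫ x in (0 : ℝ)..1, (if fbh x = k then 1 else 0 : ℝ) = 2 ^ (-k) := by
  have hind : EqOn (fun x => if fbh x = k then (1 : ℝ) else 0) ((fbhLevel k).indicator 1)
      (Ioc 0 1) := fun x hx => by
    classical exact if_congr (fbh_eq_iff_mem_fbhLevel hx.1) rfl rfl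
  rw [intervalIntegral.integral_of_le zero_le_one, setIntegral_congr_fun measurableSet_Ioc hind,
    integral_indicator_one (measurableSet_fbhLevel k),
    measureReal_restrict_apply (measurableSet_fbhLevel k),
    inter_eq_left.2 ((fbhLevel_subset_Ioo hk).trans Ioo_subset_Ioc_self), volume_real_fbhLevel]

lemma setIntegral_fbhLevel_zpow_neg_fbh (k : ℤ) :
    ∫ y in fbhLevel k, (2 : ℝ) ^ (-fbh y) = (2 ^ (-k)) ^ 2 := by
  rw [setIntegral_congr_fun (measurableSet_fbhLevel k)
      (fun y hy => by simp only [(fbh_eq_iff_mem_fbhLevel (pos_of_mem_fbhLevel hy)).2 hy] :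
        EqOn (fun y => (2 : ℝ) ^ (-fbh y)) (fun _ => 2 ^ (-k)) (fbhLevel k)),
    setIntegral_const, volume_real_fbhLevel, smul_eq_mul, sq]

lemma iUnion_fbhLevel_natCast_add_one : ⋃ n : ℕ, fbhLevel (n + 1) = Ioo 0 1 := by
  refine (iUnion_subset fun n => fbhLevel_subset_Ioo (by omega)).antisymm fun y hy => ?_
  obtain ⟨n, hn⟩ : ∃ n : ℕ, fbh y = n + 1 := ⟨(fbh y - 1).toNat, by have := one_le_fbh hy; omega⟩
  exact mem_iUnion.2 ⟨n, hn ▸ mem_fbhLevel_fbh hy.1⟩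

lemma integrableOn_zpow_neg_fbh : IntegrableOn (fun y : ℝ => (2 : ℝ) ^ (-fbh y)) (Ioo 0 1) := by
  refine Measure.integrableOn_of_bounded (M := 1) (by simp [Real.volume_Ioo])
    (measurable_from_top.comp measurable_fbh.neg).aestronglyMeasurable ?_
  refine (ae_restrict_iff' measurableSet_Ioo).2 (Filter.Eventually.of_forall fun y hy => ?_)
  rw [Real.norm_of_nonneg (zpow_pos two_pos _).le]
  exact zpow_le_one_of_nonpos₀ one_le_two (by linarith [one_le_fbh hy])

lemma integral_zpow_neg_fbh : ∫ y in Ioo (0 : ℝ) 1, (2 : ℝ) ^ (-fbh y) = 1 / 3 := by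
  have hdisj : Pairwise (Disjoint on fun n : ℕ => fbhLevel (n + 1)) :=
    pairwise_disjoint_fbhLevel.comp_of_injective ((add_left_injective 1).comp Nat.cast_injective)
  rw [← iUnion_fbhLevel_natCast_add_one, integral_iUnion (fun _ => measurableSet_fbhLevel _) hdisj
    (iUnion_fbhLevel_natCast_add_one ▸ integrableOn_zpow_neg_fbh)]
  have hterm (n : ℕ) : ((2 : ℝ) ^ (-((n : ℤ) + 1))) ^ 2 = 1 / 4 * (1 / 4) ^ n := by
    rw [← pow_succ', ← Nat.cast_succ, zpow_neg, zpow_natCast, ← inv_pow, ← pow_mul, mul_comm,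
      pow_mul]
    norm_num
  simp_rw [setIntegral_fbhLevel_zpow_neg_fbh, hterm, tsum_mul_left]
  rw [tsum_geometric_of_lt_one (by norm_num) (by norm_num)]
  norm_num

/-- In the two-player Levine game with infinite stacks, if both players use the
first-black-hat strategy `k(y) = -⌊log₂ y⌋`, the probability of victory is `1/3`:
`∫₀¹∫₀¹ ε(2^{k(y)} x) ε(2^{k(x)} y) dx dy = 1/3`. -/
theorem fbh_vs_fbh_value :
    ∫ y in (0 : ℝ)..1, ∫ x in (0 : ℝ)..1,
        eps ((2 : ℝ) ^ (fbh y) * x) * eps ((2 : ℝ) ^ (fbh x) * y) = 1 / 3 := by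
  have hinner : EqOn (fun y => ∫ x in (0 : ℝ)..1,
      eps ((2 : ℝ) ^ (fbh y) * x) * eps ((2 : ℝ) ^ (fbh x) * y)) (fun y => 2 ^ (-fbh y))
      (Ioo 0 1) := fun y hy => by
    dsimp only
    rw [← integral_ite_fbh_eq (one_le_fbh hy)]
    refine intervalIntegral.integral_congr_ae (Filter.Eventually.of_forall fun x hx => ?_)
    rw [uIoc_of_le zero_le_one] at hx
    exact eps_mul_eps_eq_ite hx.1 hy.1
  rw [intervalIntegral.integral_of_le zero_le_one, integral_Ioc_eq_integral_Ioo,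
    setIntegral_congr_fun measurableSet_Ioo hinner, integral_zpow_neg_fbh]
end
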